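/- For the min-plus (tropical) traffic matrix A of size n (with diagonal entries v, superdiagonal entries −σ, corner entry A_{n,1} = m − σ, all other entries +∞), the min-plus eigenvalue of A equals min(v, (m − nσ)/n). Precisely, with μ = min(v, (m−nσ)/n), there exists a vector x ∈ ℝ^n such that for every i, min_j (A_{ij} + x_j) = μ + x_i. -/

import Mathlib

/-!
The eigenvector is the potential `x i = i * (μ + σ)`. Along the superdiagonal
`-σ + x (i + 1) = μ + x i` holds exactly, so the only row where the minimum could
fall short of `μ + x i` is the last one, whose two finite entries give `v + x (n - 1)`
(the loop) and `m - σ + x 0` (closing the cycle). These are `≥ μ + x (n - 1)` precisely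
because `μ ≤ v` and `n μ ≤ m - n σ`, and one of them is attained since `μ` is the smaller
of the two cycle means `v` and `(m - n σ) / n`.
-/

section TrafficMatrix

variable {n : ℕ} (hn : 1 ≤ n) {v σ m μ : ℝ} {A : Fin n → Fin n → EReal}
  (hdiag : ∀ i, A i i = (v : EReal))
  (hsup : ∀ i : Fin n, ∀ h : (i : ℕ) + 1 < n, A i ⟨(i : ℕ) + 1, h⟩ = ((-σ : ℝ) : EReal))
  (hcorner : A ⟨n - 1, Nat.sub_lt hn Nat.one_pos⟩ ⟨0, hn⟩ = ((m - σ : ℝ) : EReal))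
  (hother : ∀ i j : Fin n, ¬ (j = i) → ¬ ((j : ℕ) = (i : ℕ) + 1) →
    ¬ ((i : ℕ) = n - 1 ∧ (j : ℕ) = 0) → A i j = (⊤ : EReal))

include hsup in
theorem traffic_superdiag_add_potential {i j : Fin n} (hj : (j : ℕ) = i + 1) :
    A i j + (((j : ℕ) : ℝ) * (μ + σ) : ℝ) = (μ : EReal) + (((i : ℕ) : ℝ) * (μ + σ) : ℝ) := by
  rw [show j = ⟨i + 1, hj ▸ j.2⟩ from Fin.ext hj, hsup, Fin.val_mk]
  norm_cast
  push_cast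
  ring

include hcorner in
theorem traffic_corner_add_potential {i j : Fin n} (hi : (i : ℕ) = n - 1) (hj : (j : ℕ) = 0) :
    A i j + (((j : ℕ) : ℝ) * (μ + σ) : ℝ)
      = ((μ + ((i : ℕ) : ℝ) * (μ + σ) + (m - n * σ - n * μ) : ℝ) : EReal) := by
  rw [show i = ⟨n - 1, Nat.sub_lt hn Nat.one_pos⟩ from Fin.ext hi,
    show j = ⟨0, hn⟩ from Fin.ext hj,
    hcorner, Fin.val_mk, Fin.val_mk]
  norm_cast
  push_cast [Nat.cast_sub hn]
  ring

include hdiag hsup hcorner hother in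
theorem traffic_le_add_potential (hμv : μ ≤ v) (hμm : n * μ ≤ m - n * σ) (i j : Fin n) :
    (μ : EReal) + (((i : ℕ) : ℝ) * (μ + σ) : ℝ) ≤ A i j + (((j : ℕ) : ℝ) * (μ + σ) : ℝ) := by
  by_cases hji : j = i
  · subst hji
    rw [hdiag]
    exact_mod_cast add_le_add_left hμv _
  by_cases hsucc : (j : ℕ) = i + 1
  · exact (traffic_superdiag_add_potential hsup hsucc).ge
  by_cases hcycle : (i : ℕ) = n - 1 ∧ (j : ℕ) = 0
  · rw [traffic_corner_add_potential hn hcorner hcycle.1 hcycle.2]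
    exact_mod_cast by linarith
  · rw [hother i j hji hsucc hcycle, EReal.top_add_coe]
    exact le_top

include hdiag hsup hcorner in
theorem traffic_exists_add_potential_eq (hμ : μ = min v ((m - n * σ) / n)) (i : Fin n) :
    ∃ j, A i j + (((j : ℕ) : ℝ) * (μ + σ) : ℝ) = (μ : EReal) + (((i : ℕ) : ℝ) * (μ + σ) : ℝ) := by
  by_cases hi : (i : ℕ) + 1 < n
  · exact ⟨⟨i + 1, hi⟩, traffic_superdiag_add_potential hsup rfl⟩
  have hlast : (i : ℕ) = n - 1 := by omega
  rcases min_choice v ((m - n * σ) / n) with hloop | hcycle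
  · exact ⟨i, by rw [hdiag, hμ, hloop]⟩
  · refine ⟨⟨0, hn⟩, ?_⟩
    have hμm : n * μ = m - n * σ := by
      rw [hμ, hcycle]
      field_simp [show (n : ℝ) ≠ 0 by positivity]
    rw [traffic_corner_add_potential hn hcorner hlast rfl, hμm, sub_self, add_zero, EReal.coe_add]

end TrafficMatrix

theorem stmt_2 {n : ℕ} (hn : 1 ≤ n) (v σ m : ℝ)
    (A : Fin n → Fin n → EReal)
    (hdiag : ∀ i, A i i = (v : EReal))
    (hsup : ∀ i : Fin n, ∀ h : (i : ℕ) + 1 < n, A i ⟨(i : ℕ) + 1, h⟩ = ((-σ : ℝ) : EReal))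
    (hcorner : A ⟨n - 1, by omega⟩ ⟨0, by omega⟩ = ((m - σ : ℝ) : EReal))
    (hother : ∀ i j : Fin n, ¬ (j = i) → ¬ ((j : ℕ) = (i : ℕ) + 1) →
      ¬ ((i : ℕ) = n - 1 ∧ (j : ℕ) = 0) → A i j = (⊤ : EReal))
    (μ : ℝ) (hμ : μ = min v ((m - n * σ) / n)) :
    ∃ x : Fin n → ℝ, ∀ i : Fin n,
      (⨅ j : Fin n, A i j + ((x j : ℝ) : EReal)) = ((μ : ℝ) : EReal) + (x i : ℝ) := by
  have hn0 : (0 : ℝ) < n := by exact_mod_cast hn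
  have hμv : μ ≤ v := hμ ▸ min_le_left _ _
  have hμm : n * μ ≤ m - n * σ := (le_div_iff₀' hn0).mp (hμ ▸ min_le_right _ _)
  refine ⟨fun i => ((i : ℕ) : ℝ) * (μ + σ), fun i => ?_⟩
  obtain ⟨j, hj⟩ := traffic_exists_add_potential_eq hn hdiag hsup hcorner hμ i
  exact le_antisymm (iInf_le_of_le j hj.le)
    (le_iInf (traffic_le_add_potential hn hdiag hsup hcorner hother hμv hμm i))
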